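/- For all n ≥ 0, spa(n) is even if and only if n mod 7 is one of 1, 2, or 4. -/
import Mathlib

def spa : ℕ → ℕ
  | 0 => 1
  | 1 => 0
  | n + 2 => if (n + 2) % 2 = 0 then spa ((n + 2) / 2) else spa n + spa (n - 1)
decreasing_by all_goals omega

theorem spa_even_iff (n : ℕ) : Even (spa n) ↔ n % 7 = 1 ∨ n % 7 = 2 ∨ n % 7 = 4 := by
  induction n using Nat.strong_induction_on with
  | _ n ih =>
    match n with
    | 0 => simp [spa]
    | 1 => simp [spa]
    | n + 2 =>
      rw [spa]
      by_cases h : (n + 2) % 2 = 0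
      · rw [if_pos h, ih ((n + 2) / 2) (by omega)]
        omega
      · rw [if_neg h, Nat.even_add, ih n (by omega), ih (n - 1) (by omega)]
        omega
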